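/- For jointly distributed finitely supported random variables X, X', Y, Y', Z with (X,Y) independent of (X',Y'): (a) I(XX';YY'|Z) ≥ I(X;Y|Z) + I(X';Y'|X,Y,Z); (b) I(XX';Z|YY') ≥ I(X;Z|Y) + I(X'; (X,Y,Z) | Y') − I(X,Y; X',Y'); (c) I(YY';Z|XX') ≥ I(Y;Z|X) + I(Y'; (X,Y,Z) | X') − I(X,Y; X',Y'). Here XX' denotes the pair (X,X'), etc. -/

import Mathlib

/-!
Entropy sees a random variable only through the partition of `Ω` into its fibres, so regrouping
and reordering tuples costs nothing, and each of the three inequalities becomes an identity whose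
slack is a sum of (conditional) mutual informations: `I(X';Y|XZ) + I(X;Y'|YZ)` in (a),
`I(X;Y'|YZ) + I(Y;Y')` in (b), and `I(Y;X'|XZ) + I(X;X')` in (c), which is (b) with the roles of
`X` and `Y` exchanged. Conditional mutual information is nonnegative by `log t ≤ t - 1` applied to
`t = p(x,z) p(y,z) / (p(x,y,z) p(z))`, whose expectation is at most `1`.
-/

open Real BigOperators Finset

section Defs
variable {Ω : Type} [Fintype Ω]

/-- `p` is a probability mass function on the finite sample space `Ω`. -/
def IsPmf (p : Ω → ℝ) : Prop := (∀ ω, 0 ≤ p ω) ∧ ∑ ω, p ω = 1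

/-- Distribution of the random variable `f` under `p`. -/
noncomputable def distOf (p : Ω → ℝ) {α : Type} [Fintype α] [DecidableEq α]
    (f : Ω → α) : α → ℝ := fun a => ∑ ω, if f ω = a then p ω else 0

/-- Shannon entropy (in nats) of the random variable `f` under `p`. -/
noncomputable def ent (p : Ω → ℝ) {α : Type} [Fintype α] [DecidableEq α]
    (f : Ω → α) : ℝ := ∑ a, Real.negMulLog (distOf p f a)

/-- Mutual information `I(f;g)` under `p`. -/
noncomputable def mi (p : Ω → ℝ) {α β : Type} [Fintype α] [DecidableEq α]
    [Fintype β] [DecidableEq β] (f : Ω → α) (g : Ω → β) : ℝ :=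
  ent p f + ent p g - ent p (fun ω => (f ω, g ω))

/-- Conditional mutual information `I(f;g|h)` under `p`. -/
noncomputable def cmi (p : Ω → ℝ) {α β γ : Type} [Fintype α] [DecidableEq α]
    [Fintype β] [DecidableEq β] [Fintype γ] [DecidableEq γ]
    (f : Ω → α) (g : Ω → β) (h : Ω → γ) : ℝ :=
  ent p (fun ω => (f ω, h ω)) + ent p (fun ω => (g ω, h ω))
    - ent p (fun ω => (f ω, g ω, h ω)) - ent p h

end Defs

/-- Tension region of `(X,Y)`: the set of triples
`(I(X;Z|Y), I(Y;Z|X), I(X;Y|Z))` as `Z` ranges over all finitely supported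
random variables jointly distributed with `(X,Y)`. -/
def tension {Ω : Type} [Fintype Ω] {α β : Type} [Fintype α] [DecidableEq α]
    [Fintype β] [DecidableEq β] (p : Ω → ℝ) (X : Ω → α) (Y : Ω → β) :
    Set (ℝ × ℝ × ℝ) :=
  { t | ∃ (m : ℕ) (q : α × β × Fin m → ℝ), IsPmf q ∧
      distOf q (fun w => (w.1, w.2.1)) = distOf p (fun ω => (X ω, Y ω)) ∧
      t = (cmi q (fun w => w.1) (fun w => w.2.2) (fun w => w.2.1),
           cmi q (fun w => w.2.1) (fun w => w.2.2) (fun w => w.1),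
           cmi q (fun w => w.1) (fun w => w.2.1) (fun w => w.2.2)) }

section Entropy

variable {Ω α β γ : Type} [Fintype Ω] [Fintype α] [DecidableEq α]
  [Fintype β] [DecidableEq β] [Fintype γ] [DecidableEq γ] (p : Ω → ℝ)

lemma sum_mul_comp_eq_sum_distOf_mul (f : Ω → α) (φ : α → ℝ) :
    ∑ ω, p ω * φ (f ω) = ∑ a, distOf p f a * φ a := by
  simp only [distOf, Finset.sum_mul, ite_mul, zero_mul]
  rw [Finset.sum_comm]
  simp

lemma sum_distOf (f : Ω → α) : ∑ a, distOf p f a = ∑ ω, p ω := by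
  simpa using (sum_mul_comp_eq_sum_distOf_mul p f fun _ => 1).symm

lemma sum_distOf_prod_left (f : Ω → α) (h : Ω → γ) (c : γ) :
    ∑ a, distOf p (fun ω => (f ω, h ω)) (a, c) = distOf p h c := by
  simp only [distOf, Prod.mk.injEq, ite_and]
  rw [Finset.sum_comm]
  simp

lemma distOf_nonneg (hp : ∀ ω, 0 ≤ p ω) (f : Ω → α) (a : α) : 0 ≤ distOf p f a :=
  Finset.sum_nonneg fun ω _ => by split_ifs <;> simp [hp ω]

lemma le_distOf_apply (hp : ∀ ω, 0 ≤ p ω) (f : Ω → α) (ω : Ω) : p ω ≤ distOf p f (f ω) := by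
  simpa [distOf] using Finset.single_le_sum (f := fun ω' => if f ω' = f ω then p ω' else 0)
    (fun ω' _ => by split_ifs <;> simp [hp ω']) (Finset.mem_univ ω)

lemma ent_eq_neg_sum_mul_log (f : Ω → α) :
    ent p f = -∑ ω, p ω * log (distOf p f (f ω)) := by
  rw [sum_mul_comp_eq_sum_distOf_mul p f fun a => log (distOf p f a), ent,
    ← Finset.sum_neg_distrib]
  simp only [negMulLog, neg_mul]

lemma ent_congr {f : Ω → α} {g : Ω → β} (hfg : ∀ ω ω', f ω = f ω' ↔ g ω = g ω') :
    ent p f = ent p g := by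
  have hdist : ∀ ω, distOf p f (f ω) = distOf p g (g ω) := fun ω =>
    Finset.sum_congr rfl fun ω' _ => by simp only [hfg ω' ω]
  simp only [ent_eq_neg_sum_mul_log, hdist]

lemma ent_unit (hp : ∑ ω, p ω = 1) : ent p (fun _ => ()) = 0 := by
  simp [ent, distOf, hp]

lemma sum_distOf_mul_distOf_div_distOf (f : Ω → α) (g : Ω → β) (h : Ω → γ) :
    ∑ x : α × β × γ, distOf p (fun ω => (f ω, h ω)) (x.1, x.2.2)
        * distOf p (fun ω => (g ω, h ω)) (x.2.1, x.2.2) / distOf p h x.2.2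
      = ∑ ω, p ω := by
  calc _ = ∑ c, (∑ a, distOf p (fun ω => (f ω, h ω)) (a, c))
          * (∑ b, distOf p (fun ω => (g ω, h ω)) (b, c)) / distOf p h c := by
        simp only [Fintype.sum_prod_type, Finset.sum_mul_sum, Finset.sum_div]
        exact (Finset.sum_congr rfl fun _ _ => Finset.sum_comm).trans Finset.sum_comm
    _ = ∑ c, distOf p h c := by simp only [sum_distOf_prod_left, mul_self_div_self]
    _ = ∑ ω, p ω := sum_distOf p h

lemma cmi_nonneg (hp : IsPmf p) (f : Ω → α) (g : Ω → β) (h : Ω → γ) : 0 ≤ cmi p f g h := by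
  set F : Ω → α × β × γ := fun ω => (f ω, g ω, h ω)
  set A := distOf p (fun ω => (f ω, h ω))
  set B := distOf p (fun ω => (g ω, h ω))
  set C := distOf p h
  set D := distOf p F
  set q : α × β × γ → ℝ := fun x => A (x.1, x.2.2) * B (x.2.1, x.2.2) / (C x.2.2 * D x)
  have hcmi : cmi p f g h = ∑ ω, p ω * (log (D (F ω)) + log (C (h ω))
      - log (A (f ω, h ω)) - log (B (g ω, h ω))) := by
    simp only [cmi, ent_eq_neg_sum_mul_log, mul_add, mul_sub, Finset.sum_add_distrib,
      Finset.sum_sub_distrib]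
    ring
  have hlog : ∀ ω, p ω - p ω * q (F ω) ≤ p ω * (log (D (F ω)) + log (C (h ω))
      - log (A (f ω, h ω)) - log (B (g ω, h ω))) := by
    intro ω
    rcases (hp.1 ω).eq_or_lt with hω | hω
    · simp [← hω]
    have hA := hω.trans_le (le_distOf_apply p hp.1 (fun ω => (f ω, h ω)) ω)
    have hB := hω.trans_le (le_distOf_apply p hp.1 (fun ω => (g ω, h ω)) ω)
    have hC := hω.trans_le (le_distOf_apply p hp.1 h ω)
    have hD := hω.trans_le (le_distOf_apply p hp.1 F ω)
    have := Real.log_le_sub_one_of_pos (show 0 < q (F ω) by positivity)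
    rw [Real.log_div (by positivity) (by positivity), Real.log_mul hA.ne' hB.ne',
      Real.log_mul hC.ne' hD.ne'] at this
    linarith [mul_le_mul_of_nonneg_left this hω.le]
  have hq : ∑ ω, p ω * q (F ω) ≤ ∑ ω, p ω := by
    rw [sum_mul_comp_eq_sum_distOf_mul p F q, ← sum_distOf_mul_distOf_div_distOf p f g h]
    refine Finset.sum_le_sum fun x _ => ?_
    rcases (distOf_nonneg p hp.1 F x).eq_or_lt with hx | hx
    · rw [← hx, zero_mul]
      exact div_nonneg (mul_nonneg (distOf_nonneg p hp.1 _ _) (distOf_nonneg p hp.1 _ _))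
        (distOf_nonneg p hp.1 _ _)
    · rw [mul_div_assoc', mul_comm (C _), mul_div_mul_left _ _ hx.ne']
  rw [hcmi]
  calc (0 : ℝ) ≤ ∑ ω, p ω - ∑ ω, p ω * q (F ω) := sub_nonneg.2 hq
    _ = ∑ ω, (p ω - p ω * q (F ω)) := (Finset.sum_sub_distrib ..).symm
    _ ≤ _ := Finset.sum_le_sum fun ω _ => hlog ω

lemma mi_nonneg (hp : IsPmf p) (f : Ω → α) (g : Ω → β) : 0 ≤ mi p f g := by
  have key := cmi_nonneg p hp f g fun _ => ()
  have ef : ent p (fun ω => (f ω, ())) = ent p f := ent_congr p fun _ _ => by simp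
  have eg : ent p (fun ω => (g ω, ())) = ent p g := ent_congr p fun _ _ => by simp
  have efg : ent p (fun ω => (f ω, g ω, ())) = ent p (fun ω => (f ω, g ω)) :=
    ent_congr p fun _ _ => by simp
  rwa [cmi, ef, eg, efg, ent_unit p hp.2, sub_zero] at key

end Entropy

section Decompositions

variable {Ω α β α' β' γ : Type} [Fintype Ω] [Fintype α] [DecidableEq α]
  [Fintype β] [DecidableEq β] [Fintype α'] [DecidableEq α'] [Fintype β'] [DecidableEq β']
  [Fintype γ] [DecidableEq γ]
  (p : Ω → ℝ) (X : Ω → α) (Y : Ω → β) (X' : Ω → α') (Y' : Ω → β') (Z : Ω → γ)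

lemma cmi_prod_prod_eq :
    cmi p (fun ω => (X ω, X' ω)) (fun ω => (Y ω, Y' ω)) Z
      = cmi p X Y Z + cmi p X' Y' (fun ω => (X ω, Y ω, Z ω))
        + cmi p X' Y (fun ω => (X ω, Z ω)) + cmi p X Y' (fun ω => (Y ω, Z ω)) := by
  have e1 : ent p (fun ω => ((X ω, X' ω), Z ω)) = ent p (fun ω => (X' ω, X ω, Z ω)) :=
    ent_congr p fun _ _ => by simp only [Prod.mk.injEq]; tauto
  have e2 : ent p (fun ω => ((Y ω, Y' ω), Z ω)) = ent p (fun ω => (Y' ω, Y ω, Z ω)) :=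
    ent_congr p fun _ _ => by simp only [Prod.mk.injEq]; tauto
  have e3 : ent p (fun ω => ((X ω, X' ω), (Y ω, Y' ω), Z ω))
      = ent p (fun ω => (X' ω, Y' ω, (X ω, Y ω, Z ω))) :=
    ent_congr p fun _ _ => by simp only [Prod.mk.injEq]; tauto
  have e4 : ent p (fun ω => (X' ω, Y ω, (X ω, Z ω))) = ent p (fun ω => (X' ω, (X ω, Y ω, Z ω))) :=
    ent_congr p fun _ _ => by simp only [Prod.mk.injEq]; tauto
  have e5 : ent p (fun ω => (X ω, Y' ω, (Y ω, Z ω))) = ent p (fun ω => (Y' ω, (X ω, Y ω, Z ω))) :=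
    ent_congr p fun _ _ => by simp only [Prod.mk.injEq]; tauto
  have e6 : ent p (fun ω => (Y ω, (X ω, Z ω))) = ent p (fun ω => (X ω, Y ω, Z ω)) :=
    ent_congr p fun _ _ => by simp only [Prod.mk.injEq]; tauto
  simp only [cmi]
  linarith

lemma cmi_prod_cond_prod_add_mi_eq :
    cmi p (fun ω => (X ω, X' ω)) Z (fun ω => (Y ω, Y' ω))
        + mi p (fun ω => (X ω, Y ω)) (fun ω => (X' ω, Y' ω))
      = cmi p X Z Y + cmi p X' (fun ω => (X ω, Y ω, Z ω)) Y'
        + cmi p X Y' (fun ω => (Y ω, Z ω)) + mi p Y Y' := by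
  have e1 : ent p (fun ω => ((X ω, X' ω), (Y ω, Y' ω)))
      = ent p (fun ω => ((X ω, Y ω), (X' ω, Y' ω))) :=
    ent_congr p fun _ _ => by simp only [Prod.mk.injEq]; tauto
  have e2 : ent p (fun ω => (Z ω, (Y ω, Y' ω))) = ent p (fun ω => (Y' ω, (Y ω, Z ω))) :=
    ent_congr p fun _ _ => by simp only [Prod.mk.injEq]; tauto
  have e3 : ent p (fun ω => ((X ω, X' ω), Z ω, (Y ω, Y' ω)))
      = ent p (fun ω => (X' ω, (X ω, Y ω, Z ω), Y' ω)) :=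
    ent_congr p fun _ _ => by simp only [Prod.mk.injEq]; tauto
  have e4 : ent p (fun ω => (Z ω, Y ω)) = ent p (fun ω => (Y ω, Z ω)) :=
    ent_congr p fun _ _ => by simp only [Prod.mk.injEq]; tauto
  have e5 : ent p (fun ω => (X ω, Z ω, Y ω)) = ent p (fun ω => (X ω, Y ω, Z ω)) :=
    ent_congr p fun _ _ => by simp only [Prod.mk.injEq]; tauto
  have e6 : ent p (fun ω => ((X ω, Y ω, Z ω), Y' ω)) = ent p (fun ω => (X ω, Y' ω, (Y ω, Z ω))) :=
    ent_congr p fun _ _ => by simp only [Prod.mk.injEq]; tauto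
  simp only [cmi, mi]
  linarith

lemma cmi_prod_cond_prod_add_mi_eq' :
    cmi p (fun ω => (Y ω, Y' ω)) Z (fun ω => (X ω, X' ω))
        + mi p (fun ω => (X ω, Y ω)) (fun ω => (X' ω, Y' ω))
      = cmi p Y Z X + cmi p Y' (fun ω => (X ω, Y ω, Z ω)) X'
        + cmi p Y X' (fun ω => (X ω, Z ω)) + mi p X X' := by
  have hYX := cmi_prod_cond_prod_add_mi_eq p Y X Y' X' Z
  have e1 : ent p (fun ω => (Y ω, X ω)) = ent p (fun ω => (X ω, Y ω)) :=
    ent_congr p fun _ _ => by simp only [Prod.mk.injEq]; tauto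
  have e2 : ent p (fun ω => (Y' ω, X' ω)) = ent p (fun ω => (X' ω, Y' ω)) :=
    ent_congr p fun _ _ => by simp only [Prod.mk.injEq]; tauto
  have e3 : ent p (fun ω => ((Y ω, X ω), (Y' ω, X' ω)))
      = ent p (fun ω => ((X ω, Y ω), (X' ω, Y' ω))) :=
    ent_congr p fun _ _ => by simp only [Prod.mk.injEq]; tauto
  have e4 : ent p (fun ω => ((Y ω, X ω, Z ω), X' ω)) = ent p (fun ω => ((X ω, Y ω, Z ω), X' ω)) :=
    ent_congr p fun _ _ => by simp only [Prod.mk.injEq]; tauto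
  have e5 : ent p (fun ω => (Y' ω, (Y ω, X ω, Z ω), X' ω))
      = ent p (fun ω => (Y' ω, (X ω, Y ω, Z ω), X' ω)) :=
    ent_congr p fun _ _ => by simp only [Prod.mk.injEq]; tauto
  simp only [cmi, mi] at hYX ⊢
  linarith

end Decompositions

theorem stmt10_general {Ω α β α' β' γ : Type} [Fintype Ω]
    [Fintype α] [DecidableEq α] [Fintype β] [DecidableEq β]
    [Fintype α'] [DecidableEq α'] [Fintype β'] [DecidableEq β']
    [Fintype γ] [DecidableEq γ]
    (p : Ω → ℝ) (hp : IsPmf p)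
    (X : Ω → α) (Y : Ω → β) (X' : Ω → α') (Y' : Ω → β') (Z : Ω → γ) :
    (cmi p (fun ω => (X ω, X' ω)) (fun ω => (Y ω, Y' ω)) Z
      ≥ cmi p X Y Z + cmi p X' Y' (fun ω => (X ω, Y ω, Z ω))) ∧
    (cmi p (fun ω => (X ω, X' ω)) Z (fun ω => (Y ω, Y' ω))
      ≥ cmi p X Z Y + cmi p X' (fun ω => (X ω, Y ω, Z ω)) Y'
        - mi p (fun ω => (X ω, Y ω)) (fun ω => (X' ω, Y' ω))) ∧
    (cmi p (fun ω => (Y ω, Y' ω)) Z (fun ω => (X ω, X' ω))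
      ≥ cmi p Y Z X + cmi p Y' (fun ω => (X ω, Y ω, Z ω)) X'
        - mi p (fun ω => (X ω, Y ω)) (fun ω => (X' ω, Y' ω))) := by
  refine ⟨?_, ?_, ?_⟩
  · linarith [cmi_prod_prod_eq p X Y X' Y' Z, cmi_nonneg p hp X' Y (fun ω => (X ω, Z ω)),
      cmi_nonneg p hp X Y' (fun ω => (Y ω, Z ω))]
  · linarith [cmi_prod_cond_prod_add_mi_eq p X Y X' Y' Z,
      cmi_nonneg p hp X Y' (fun ω => (Y ω, Z ω)), mi_nonneg p hp Y Y']
  · linarith [cmi_prod_cond_prod_add_mi_eq' p X Y X' Y' Z,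
      cmi_nonneg p hp Y X' (fun ω => (X ω, Z ω)), mi_nonneg p hp X X']

/-- For `(X,Y)` independent of `(X',Y')`, three Shannon inequalities:
(a) `I(XX';YY'|Z) ≥ I(X;Y|Z) + I(X';Y'|XYZ)`;
(b) `I(XX';Z|YY') ≥ I(X;Z|Y) + I(X';XYZ|Y') - I(XY;X'Y')`;
(c) `I(YY';Z|XX') ≥ I(Y;Z|X) + I(Y';XYZ|X') - I(XY;X'Y')`. -/
theorem stmt10 {Ω α β α' β' γ : Type} [Fintype Ω]
    [Fintype α] [DecidableEq α] [Fintype β] [DecidableEq β]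
    [Fintype α'] [DecidableEq α'] [Fintype β'] [DecidableEq β']
    [Fintype γ] [DecidableEq γ]
    (p : Ω → ℝ) (hp : IsPmf p)
    (X : Ω → α) (Y : Ω → β) (X' : Ω → α') (Y' : Ω → β') (Z : Ω → γ)
    (hind : mi p (fun ω => (X ω, Y ω)) (fun ω => (X' ω, Y' ω)) = 0) :
    (cmi p (fun ω => (X ω, X' ω)) (fun ω => (Y ω, Y' ω)) Z
      ≥ cmi p X Y Z + cmi p X' Y' (fun ω => (X ω, Y ω, Z ω))) ∧
    (cmi p (fun ω => (X ω, X' ω)) Z (fun ω => (Y ω, Y' ω))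
      ≥ cmi p X Z Y + cmi p X' (fun ω => (X ω, Y ω, Z ω)) Y'
        - mi p (fun ω => (X ω, Y ω)) (fun ω => (X' ω, Y' ω))) ∧
    (cmi p (fun ω => (Y ω, Y' ω)) Z (fun ω => (X ω, X' ω))
      ≥ cmi p Y Z X + cmi p Y' (fun ω => (X ω, Y ω, Z ω)) X'
        - mi p (fun ω => (X ω, Y ω)) (fun ω => (X' ω, Y' ω))) :=
  stmt10_general p hp X Y X' Y' Z
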